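/- Let A be a real N×N matrix none of whose eigenvalues lie on the unit circle. Then the sequence ‖(I - Aⁿ)⁻¹‖ (n ∈ ℕ, n ≥ 1) is bounded, where ‖·‖ is any operator norm on matrices. -/

import Mathlib

/-!
For a primitive `n`-th root of unity `ζ`, averaging the factorizations
`1 - aⁿ = (ω - a) * ∑ ωⁱ aⁿ⁻¹⁻ⁱ` over `ω = ζᵐ` gives
`(1 - aⁿ)⁻¹ = n⁻¹ • ∑ₘ ζᵐ • (ζᵐ - a)⁻¹`, an average of the resolvent over the `n`-th roots of unity.
These all lie on the unit circle, a compact set on which the resolvent is continuous because it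
misses the spectrum; so `‖(1 - aⁿ)⁻¹‖` is bounded by the maximum of `‖(ω - a)⁻¹‖` on the circle,
uniformly in `n`. A real matrix is handled through its complexification, whose `L²` operator
norm is at least that of the real matrix.
-/

open Matrix

/-- Operator norm of a real matrix induced by the Euclidean norm. -/
noncomputable def opNorm {N : ℕ} (A : Matrix (Fin N) (Fin N) ℝ) : ℝ :=
  ‖(Matrix.toEuclideanLin A).toContinuousLinearMap‖

open Finset

section ResolventAverage

variable {𝕜 𝒜 : Type*} [Field 𝕜] [Ring 𝒜] [Algebra 𝕜 𝒜] {a : 𝒜}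

theorem resolvent_mul_one_sub_pow {ω : 𝕜} {n : ℕ} (hω : ω ^ n = 1)
    (ha : ω ∈ resolventSet 𝕜 a) :
    resolvent a ω * (1 - a ^ n) = ∑ i ∈ range n, ω ^ i • a ^ (n - 1 - i) := by
  have hfactor :
      (algebraMap 𝕜 𝒜 ω - a) * ∑ i ∈ range n, ω ^ i • a ^ (n - 1 - i) = 1 - a ^ n := by
    simpa [← map_pow, hω, Algebra.smul_def] using
      (Algebra.commute_algebraMap_left ω a).mul_geom_sum₂ n
  rw [← hfactor, resolvent, Ring.inverse_mul_cancel_left _ _ ha]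

theorem IsPrimitiveRoot.geom_sum_pow_eq_zero {ζ : 𝕜} {n k : ℕ} (hζ : IsPrimitiveRoot ζ n)
    (hk : 0 < k) (hkn : k < n) : ∑ m ∈ range n, (ζ ^ k) ^ m = 0 := by
  rw [geom_sum_eq (hζ.pow_ne_one_of_pos_of_lt hk.ne' hkn), ← pow_mul, mul_comm, pow_mul,
    hζ.pow_eq_one, one_pow, sub_self, zero_div]

theorem IsPrimitiveRoot.sum_smul_resolvent_mul_one_sub_pow {ζ : 𝕜} {n : ℕ}
    (hζ : IsPrimitiveRoot ζ n) (hn : 0 < n) (ha : ∀ m, ζ ^ m ∈ resolventSet 𝕜 a) :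
    (∑ m ∈ range n, ζ ^ m • resolvent a (ζ ^ m)) * (1 - a ^ n) = (n : 𝕜) • 1 := by
  have hroot (m : ℕ) : (ζ ^ m) ^ n = 1 := by
    rw [← pow_mul, mul_comm, pow_mul, hζ.pow_eq_one, one_pow]
  calc (∑ m ∈ range n, ζ ^ m • resolvent a (ζ ^ m)) * (1 - a ^ n)
      = ∑ m ∈ range n, ∑ i ∈ range n, (ζ ^ (i + 1)) ^ m • a ^ (n - 1 - i) := by
        rw [sum_mul]
        refine sum_congr rfl fun m _ => ?_
        rw [smul_mul_assoc, resolvent_mul_one_sub_pow (hroot m) (ha m), smul_sum]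
        refine sum_congr rfl fun i _ => ?_
        rw [smul_smul]
        ring_nf
    _ = ∑ i ∈ range n, (∑ m ∈ range n, (ζ ^ (i + 1)) ^ m) • a ^ (n - 1 - i) := by
        rw [sum_comm]
        simp_rw [sum_smul]
    _ = (n : 𝕜) • 1 := by
        rw [sum_eq_single_of_mem (n - 1) (mem_range.2 (by omega))]
        · simp [Nat.sub_add_cancel hn, hζ.pow_eq_one]
        · intro i hi hne
          rw [hζ.geom_sum_pow_eq_zero i.succ_pos (by grind), zero_smul]

theorem IsPrimitiveRoot.ringInverse_one_sub_pow_eq {ζ : 𝕜} {n : ℕ}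
    (hζ : IsPrimitiveRoot ζ n) (hn : 0 < n) (ha : ∀ m, ζ ^ m ∈ resolventSet 𝕜 a)
    (hunit : IsUnit (1 - a ^ n)) :
    Ring.inverse (1 - a ^ n) = (n : 𝕜)⁻¹ • ∑ m ∈ range n, ζ ^ m • resolvent a (ζ ^ m) := by
  have : NeZero n := NeZero.of_pos hn
  have hn' : (n : 𝕜) ≠ 0 := hζ.neZero'.out
  calc Ring.inverse (1 - a ^ n)
      = (n : 𝕜)⁻¹ • ((n : 𝕜) • 1 * Ring.inverse (1 - a ^ n)) := by
        rw [smul_mul_assoc, one_mul, smul_smul, inv_mul_cancel₀ hn', one_smul]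
    _ = _ := by
        rw [← hζ.sum_smul_resolvent_mul_one_sub_pow hn ha, Ring.mul_inverse_cancel_right _ _ hunit]

end ResolventAverage

theorem isUnit_one_sub_pow_of_norm_ne_one {𝒜 : Type*} [Ring 𝒜] [Algebra ℂ 𝒜] {a : 𝒜}
    (ha : ∀ μ ∈ spectrum ℂ a, ‖μ‖ ≠ 1) {n : ℕ} (hn : 0 < n) : IsUnit (1 - a ^ n) := by
  have hone : (1 : ℂ) ∉ spectrum ℂ (a ^ n) := by
    rw [spectrum.map_pow_of_pos a hn]
    rintro ⟨μ, hμ, hμn⟩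
    refine ha μ hμ ((pow_eq_one_iff_of_nonneg (norm_nonneg μ) hn.ne').1 ?_)
    rw [← norm_pow, show μ ^ n = 1 from hμn, norm_one]
  simpa [spectrum.notMem_iff] using hone

theorem IsCompact.exists_norm_resolvent_le {𝕜 𝒜 : Type*} [NontriviallyNormedField 𝕜]
    [NormedRing 𝒜] [NormedAlgebra 𝕜 𝒜] [CompleteSpace 𝒜] {a : 𝒜} {K : Set 𝕜}
    (hK : IsCompact K) (hKa : K ⊆ resolventSet 𝕜 a) : ∃ M, ∀ z ∈ K, ‖resolvent a z‖ ≤ M :=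
  hK.exists_bound_of_continuousOn fun _ hz =>
    (spectrum.hasDerivAt_resolvent_const_left (hKa hz)).continuousAt.continuousWithinAt

theorem exists_norm_ringInverse_one_sub_pow_le {𝒜 : Type*} [NormedRing 𝒜] [NormedAlgebra ℂ 𝒜]
    [CompleteSpace 𝒜] {a : 𝒜} (ha : ∀ μ ∈ spectrum ℂ a, ‖μ‖ ≠ 1) :
    ∃ C, ∀ n, 0 < n → ‖Ring.inverse (1 - a ^ n)‖ ≤ C := by
  have hsphere : Metric.sphere (0 : ℂ) 1 ⊆ resolventSet ℂ a := fun z hz =>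
    spectrum.notMem_iff.mp fun hza => ha z hza (by simpa using hz)
  obtain ⟨M, hM⟩ := (isCompact_sphere (0 : ℂ) 1).exists_norm_resolvent_le hsphere
  refine ⟨M, fun n hn => ?_⟩
  have hζ := Complex.isPrimitiveRoot_exp n hn.ne'
  set ζ := Complex.exp (2 * Real.pi * Complex.I / n)
  have hnorm (m : ℕ) : ‖ζ ^ m‖ = 1 := by rw [norm_pow, hζ.norm'_eq_one hn.ne', one_pow]
  have hmem (m : ℕ) : ζ ^ m ∈ Metric.sphere (0 : ℂ) 1 := by simpa using hnorm m
  rw [hζ.ringInverse_one_sub_pow_eq hn (fun m => hsphere (hmem m))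
    (isUnit_one_sub_pow_of_norm_ne_one ha hn)]
  calc ‖(n : ℂ)⁻¹ • ∑ m ∈ range n, ζ ^ m • resolvent a (ζ ^ m)‖
      ≤ ‖(n : ℂ)⁻¹‖ * ∑ m ∈ range n, ‖ζ ^ m • resolvent a (ζ ^ m)‖ :=
        (norm_smul_le _ _).trans (by gcongr; exact norm_sum_le _ _)
    _ ≤ ‖(n : ℂ)⁻¹‖ * ∑ m ∈ range n, M := by
        gcongr with m
        exact (norm_smul_le _ _).trans (by rw [hnorm, one_mul]; exact hM _ (hmem m))
    _ = M := by
        simp only [norm_inv, Complex.norm_natCast, sum_const, card_range, nsmul_eq_mul]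
        field_simp

theorem RingHom.mapMatrix_nonsing_inv {K L n : Type*} [Field K] [Field L] [Fintype n]
    [DecidableEq n] (f : K →+* L) (A : Matrix n n K) :
    f.mapMatrix A⁻¹ = (f.mapMatrix A)⁻¹ := by
  rw [Matrix.inv_def, Matrix.inv_def, ← RingHom.map_det, ← f.map_adjugate]
  ext i j
  simp [Ring.inverse_eq_inv']

theorem EuclideanSpace.norm_toLp_ofReal {ι : Type*} [Fintype ι] (v : ι → ℝ) :
    ‖WithLp.toLp 2 (fun i => (v i : ℂ))‖ = ‖WithLp.toLp 2 v‖ := by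
  simp [EuclideanSpace.norm_eq]

open scoped Matrix.Norms.L2Operator

theorem Matrix.l2_opNorm_le_l2_opNorm_map_ofReal {m n : Type*} [Fintype m] [Fintype n]
    [DecidableEq n] (A : Matrix m n ℝ) : ‖A‖ ≤ ‖A.map ((↑) : ℝ → ℂ)‖ := by
  refine ContinuousLinearMap.opNorm_le_bound _ (norm_nonneg _) fun x => ?_
  rw [← EuclideanSpace.norm_toLp_ofReal x.ofLp]
  refine le_of_eq_of_le ?_ ((A.map _).l2_opNorm_mulVec _)
  rw [← EuclideanSpace.norm_toLp_ofReal]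
  congr 1
  ext i
  change ((A *ᵥ x.ofLp) i : ℂ) = (A.map Complex.ofReal *ᵥ fun j => (x.ofLp j : ℂ)) i
  exact Complex.ofRealHom.map_mulVec A x.ofLp i

/-- If no eigenvalue of `A` has modulus `1`, the sequence `‖(I - Aⁿ)⁻¹‖` (n ≥ 1)
is bounded. -/
theorem inv_one_sub_pow_bounded {N : ℕ} (A : Matrix (Fin N) (Fin N) ℝ)
    (hA : ∀ μ ∈ spectrum ℂ (A.map (Complex.ofReal ·)), ‖μ‖ ≠ 1) :
    ∃ C : ℝ, ∀ n : ℕ, 1 ≤ n → opNorm ((1 - A ^ n)⁻¹) ≤ C := by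
  obtain ⟨C, hC⟩ := exists_norm_ringInverse_one_sub_pow_le hA
  refine ⟨C, fun n hn => ?_⟩
  calc opNorm ((1 - A ^ n)⁻¹) ≤ ‖Complex.ofRealHom.mapMatrix (1 - A ^ n)⁻¹‖ :=
        l2_opNorm_le_l2_opNorm_map_ofReal _
    _ = ‖Ring.inverse (1 - Complex.ofRealHom.mapMatrix A ^ n)‖ := by
        rw [RingHom.mapMatrix_nonsing_inv, map_sub, map_one, map_pow, nonsing_inv_eq_ringInverse]
    _ ≤ C := hC n hn
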